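/- Let μ be a partition of n with distinct parts, let t be a μ-tableau, and let π ∈ S_n be an involution (π² = 1, π ≠ 1). Then ⟨π·e_t, e_t⟩ ≡ |supp(πt) ∩ supp(t)| (mod 2). -/
import Mathlib


noncomputable section
open scoped Classical

/-- The cells of the Young diagram of a partition `μ` (given as a list of parts):
pairs of a row index `r` and a column index `c < μ_r`. -/
abbrev YoungCell (μ : List ℕ) := (r : Fin μ.length) × Fin (μ.get r)

/-- A `μ`-tableau: a bijective filling of the Young diagram of `μ` with the symbols
`1, …, n` (here: the elements of `Fin n`). -/
abbrev YoungTableau (n : ℕ) (μ : List ℕ) := YoungCell μ ≃ Fin n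

/-- A family of rows is a `μ`-tabloid: row `r` has `μ_r` elements, the rows are pairwise
disjoint and cover `{1, …, n}`. -/
def IsTabloid (n : ℕ) (μ : List ℕ) (R : Fin μ.length → Finset (Fin n)) : Prop :=
  (∀ r, (R r).card = μ.get r) ∧
  (∀ r s, r ≠ s → Disjoint (R r) (R s)) ∧
  (∀ i, ∃ r, i ∈ R r)

/-- A `μ`-tabloid: an ordered partition of `{1, …, n}` with block sizes `μ₁, …, μ_ℓ`. -/
def Tabloid (n : ℕ) (μ : List ℕ) := {R : Fin μ.length → Finset (Fin n) // IsTabloid n μ R}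

variable {n : ℕ} {μ : List ℕ}

/-- The action of a permutation on a tabloid, applying it to each row. -/
def permTabloid (π : Equiv.Perm (Fin n)) (R : Tabloid n μ) : Tabloid n μ :=
  ⟨fun r => (R.1 r).image π, by
    obtain ⟨h1, h2, h3⟩ := R.2
    refine ⟨fun r => ?_, fun r s hrs => ?_, fun i => ?_⟩
    · rw [Finset.card_image_of_injective _ π.injective, h1 r]
    · exact (Finset.disjoint_image π.injective).mpr (h2 r s hrs)
    · obtain ⟨r, hr⟩ := h3 (π⁻¹ i)
      exact ⟨r, Finset.mem_image.mpr ⟨π⁻¹ i, hr, by simp⟩⟩⟩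

/-- The action of a permutation on a tableau (postcomposition). -/
def permTableau (π : Equiv.Perm (Fin n)) (t : YoungTableau n μ) : YoungTableau n μ :=
  t.trans π

/-- The tabloid `{t}` determined by a tableau `t`: its `r`-th row is the set of entries
in the `r`-th row of `t`. -/
def tabloidOf (t : YoungTableau n μ) : Tabloid n μ :=
  ⟨fun r => Finset.univ.image fun c : Fin (μ.get r) => t ⟨r, c⟩, by
    refine ⟨fun r => ?_, fun r s hrs => ?_, fun i => ?_⟩
    · rw [Finset.card_image_of_injective, Finset.card_univ, Fintype.card_fin]
      intro c₁ c₂ h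
      have := t.injective h
      exact (Sigma.mk.inj_iff.mp this).2.eq
    · rw [Finset.disjoint_left]
      rintro a ha hb
      obtain ⟨c₁, -, h₁⟩ := Finset.mem_image.mp ha
      obtain ⟨c₂, -, h₂⟩ := Finset.mem_image.mp hb
      have := t.injective (h₁.trans h₂.symm)
      exact hrs (Sigma.mk.inj_iff.mp this).1
    · refine ⟨(t.symm i).1,
        Finset.mem_image.mpr ⟨(t.symm i).2, Finset.mem_univ _, ?_⟩⟩
      exact t.apply_symm_apply i⟩

/-- The (index of the) row of a tableau containing a given symbol. -/
def rowIdx (t : YoungTableau n μ) (i : Fin n) : ℕ :=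
  ((t.symm i).1 : ℕ)

/-- The (index of the) column of a tableau containing a given symbol. -/
def colIdx (t : YoungTableau n μ) (i : Fin n) : ℕ :=
  ((t.symm i).2 : ℕ)

/-- The column stabilizer `C_t` of a tableau: the permutations preserving each column. -/
def colStab (t : YoungTableau n μ) : Finset (Equiv.Perm (Fin n)) :=
  Finset.univ.filter fun σ => ∀ i, colIdx t (σ i) = colIdx t i

/-- Membership in the row stabilizer `R_t` of a tableau. -/
def memRowStab (t : YoungTableau n μ) (π : Equiv.Perm (Fin n)) : Prop :=
  ∀ i, rowIdx t (π i) = rowIdx t i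

/-- The polytabloid `e_t = Σ_{σ ∈ C_t} sgn(σ)·{σt}` of a tableau `t`, an element of the
free `ℤ`-module `M^μ` on the `μ`-tabloids. -/
def polytabloid (t : YoungTableau n μ) : Tabloid n μ →₀ ℤ :=
  ∑ σ ∈ colStab t, ((Equiv.Perm.sign σ : ℤˣ) : ℤ) • Finsupp.single (tabloidOf (permTableau σ t)) 1

/-- The symmetric bilinear form on `M^μ` making the tabloids orthonormal. -/
def tabForm (x y : Tabloid n μ →₀ ℤ) : ℤ :=
  x.sum fun T a => a * y T

/-- The action of a permutation on `M^μ`, permuting the tabloid basis. -/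
def permMap (π : Equiv.Perm (Fin n)) (x : Tabloid n μ →₀ ℤ) : Tabloid n μ →₀ ℤ :=
  Finsupp.mapDomain (permTabloid π) x

/-- `supp(t)`: the set of tabloids `{σt}` for `σ ∈ C_t`. -/
def tabSupp (t : YoungTableau n μ) : Finset (Tabloid n μ) :=
  (colStab t).image fun σ => tabloidOf (permTableau σ t)

lemma mem_colStab {t : YoungTableau n μ} {σ : Equiv.Perm (Fin n)} :
    σ ∈ colStab t ↔ ∀ i, colIdx t (σ i) = colIdx t i := by
  simp [colStab]

lemma colIdx_permTableau (t : YoungTableau n μ) (π : Equiv.Perm (Fin n)) (i : Fin n) :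
    colIdx (permTableau π t) i = colIdx t (π⁻¹ i) := rfl

lemma rowIdx_permTableau (t : YoungTableau n μ) (π : Equiv.Perm (Fin n)) (i : Fin n) :
    rowIdx (permTableau π t) i = rowIdx t (π⁻¹ i) := rfl

lemma eq_one_of_row_col (t : YoungTableau n μ) (γ : Equiv.Perm (Fin n))
    (hc : ∀ i, colIdx t (γ i) = colIdx t i) (hr : ∀ i, rowIdx t (γ i) = rowIdx t i) :
    γ = 1 := by
  ext i
  have key : t.symm (γ i) = t.symm i := by
    have h1 := hr i
    have h2 := hc i
    unfold rowIdx at h1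
    unfold colIdx at h2
    set a := t.symm (γ i) with ha
    set b := t.symm i with hb
    obtain ⟨r1, c1⟩ := a
    obtain ⟨r2, c2⟩ := b
    simp only at h1 h2
    obtain rfl : r1 = r2 := Fin.ext h1
    obtain rfl : c1 = c2 := Fin.ext h2
    rfl
  have : γ i = t (t.symm (γ i)) := (t.apply_symm_apply _).symm
  rw [key, t.apply_symm_apply] at this
  simp [this]


lemma colIdx_inv {t : YoungTableau n μ} {τ : Equiv.Perm (Fin n)} (hτ : τ ∈ colStab t)
    (j : Fin n) : colIdx t (τ⁻¹ j) = colIdx t j := by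
  have := mem_colStab.mp hτ (τ⁻¹ j)
  simpa using this.symm

lemma tabloidOf_row (t : YoungTableau n μ) (r : Fin μ.length) :
    (tabloidOf t).1 r = Finset.univ.image fun c : Fin (μ.get r) => t ⟨r, c⟩ := rfl

lemma tabF_inj (t : YoungTableau n μ) {σ τ : Equiv.Perm (Fin n)}
    (hσ : σ ∈ colStab t) (hτ : τ ∈ colStab t)
    (h : tabloidOf (permTableau σ t) = tabloidOf (permTableau τ t)) : σ = τ := by
  have key : τ⁻¹ * σ = 1 := by
    apply eq_one_of_row_col t
    · intro i
      have h1 : colIdx t (σ i) = colIdx t i := mem_colStab.mp hσ i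
      have h2 : colIdx t (τ⁻¹ (σ i)) = colIdx t (σ i) := colIdx_inv hτ (σ i)
      simpa [Equiv.Perm.mul_apply] using h2.trans h1
    · intro i
      -- σ i lies in row (t.symm i).1 of tabloidOf (permTableau σ t)
      set r := (t.symm i).1 with hr
      have hmem : σ i ∈ (tabloidOf (permTableau σ t)).1 r := by
        rw [tabloidOf_row]
        refine Finset.mem_image.mpr ⟨(t.symm i).2, Finset.mem_univ _, ?_⟩
        show σ (t ⟨r, (t.symm i).2⟩) = σ i
        congr 1
        exact t.apply_symm_apply i
      rw [h, tabloidOf_row] at hmem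
      obtain ⟨c', -, hc'⟩ := Finset.mem_image.mp hmem
      have : τ (t ⟨r, c'⟩) = σ i := hc'
      have h3 : τ⁻¹ (σ i) = t ⟨r, c'⟩ := by
        rw [← this]; simp
      show rowIdx t ((τ⁻¹ * σ) i) = rowIdx t i
      rw [Equiv.Perm.mul_apply, h3]
      unfold rowIdx
      rw [t.symm_apply_apply]
  have := congrArg (fun x => τ * x) key
  simpa [mul_assoc] using this

lemma polytabloid_apply_not_mem (t : YoungTableau n μ) {T : Tabloid n μ}
    (h : T ∉ tabSupp t) : polytabloid t T = 0 := by
  rw [polytabloid, Finsupp.finset_sum_apply]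
  apply Finset.sum_eq_zero
  intro σ hσ
  have hne : tabloidOf (permTableau σ t) ≠ T := by
    intro he
    exact h (Finset.mem_image.mpr ⟨σ, hσ, he⟩)
  simp [Finsupp.single_apply, hne]

lemma polytabloid_apply_mem (t : YoungTableau n μ) {T : Tabloid n μ}
    (h : T ∈ tabSupp t) : polytabloid t T = 1 ∨ polytabloid t T = -1 := by
  obtain ⟨σ₀, hσ₀, hT⟩ := Finset.mem_image.mp h
  have : polytabloid t T = ((Equiv.Perm.sign σ₀ : ℤˣ) : ℤ) := by
    rw [polytabloid, Finsupp.finset_sum_apply]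
    rw [Finset.sum_eq_single_of_mem σ₀ hσ₀]
    · simp [hT, Finsupp.single_apply]
    · intro σ hσ hne
      have : tabloidOf (permTableau σ t) ≠ T := by
        intro he
        exact hne (tabF_inj t hσ hσ₀ (he.trans hT.symm))
      simp [Finsupp.single_apply, this]
  rw [this]
  rcases Int.units_eq_one_or (Equiv.Perm.sign σ₀) with h1 | h1 <;> rw [h1] <;> simp

lemma permTabloid_tabloidOf (π σ : Equiv.Perm (Fin n)) (t : YoungTableau n μ) :
    permTabloid π (tabloidOf (permTableau σ t))
      = tabloidOf (permTableau (π * σ * π⁻¹) (permTableau π t)) := by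
  apply Subtype.ext
  funext r
  show ((Finset.univ.image fun c : Fin (μ.get r) => σ (t ⟨r, c⟩)).image π) = _
  rw [Finset.image_image]
  apply Finset.image_congr
  intro c _
  show π (σ (t ⟨r, c⟩)) = (π * σ * π⁻¹) (π (t ⟨r, c⟩))
  simp [Equiv.Perm.mul_apply]

lemma conj_mem_colStab {t : YoungTableau n μ} {σ : Equiv.Perm (Fin n)}
    (π : Equiv.Perm (Fin n)) (hσ : σ ∈ colStab t) :
    π * σ * π⁻¹ ∈ colStab (permTableau π t) := by
  rw [mem_colStab]
  intro i
  rw [colIdx_permTableau, colIdx_permTableau]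
  simp only [Equiv.Perm.mul_apply]
  simpa using mem_colStab.mp hσ (π⁻¹ i)

lemma permMap_polytabloid (π : Equiv.Perm (Fin n)) (t : YoungTableau n μ) :
    permMap π (polytabloid t) = polytabloid (permTableau π t) := by
  rw [permMap, polytabloid, Finsupp.mapDomain_finset_sum]
  rw [polytabloid]
  rw [Finset.sum_bij (fun (σ : Equiv.Perm (Fin n)) (_ : σ ∈ colStab t) => π * σ * π⁻¹)]
  · intro σ hσ
    exact conj_mem_colStab π hσ
  · intro σ hσ τ hτ he
    exact mul_left_cancel (mul_right_cancel he)
  · intro σ' hσ'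
    refine ⟨π⁻¹ * σ' * π, ?_, by group⟩
    rw [mem_colStab]
    intro i
    have h1 := mem_colStab.mp hσ' (π i)
    rw [colIdx_permTableau, colIdx_permTableau] at h1
    simp only [Equiv.Perm.mul_apply]
    simpa using h1
  · intro σ hσ
    rw [Finsupp.mapDomain_smul, Finsupp.mapDomain_single, permTabloid_tabloidOf]
    congr 2
    rw [map_mul, map_mul, map_inv, mul_comm, ← mul_assoc]
    simp

lemma polytabloid_support_subset (t : YoungTableau n μ) :
    (polytabloid t).support ⊆ tabSupp t := by
  intro T hT
  by_contra h
  exact Finsupp.mem_support_iff.mp hT (polytabloid_apply_not_mem t h)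

lemma tabForm_polytabloid_modEq (s t : YoungTableau n μ) :
    tabForm (polytabloid s) (polytabloid t)
      ≡ ((tabSupp s ∩ tabSupp t).card : ℤ) [ZMOD 2] := by
  have hsum : tabForm (polytabloid s) (polytabloid t)
      = ∑ T ∈ tabSupp s ∩ tabSupp t, polytabloid s T * polytabloid t T := by
    rw [tabForm, Finsupp.sum_of_support_subset _ (polytabloid_support_subset s) _
      (by intro T _; simp)]
    symm
    apply Finset.sum_subset Finset.inter_subset_left
    intro T hTs hT
    have : T ∉ tabSupp t := fun ht => hT (Finset.mem_inter.mpr ⟨hTs, ht⟩)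
    rw [polytabloid_apply_not_mem t this, mul_zero]
  rw [hsum, show (2:ℤ) = ((2:ℕ):ℤ) by norm_num, ← ZMod.intCast_eq_intCast_iff]
  have key : ∀ T ∈ tabSupp s ∩ tabSupp t,
      ((polytabloid s T * polytabloid t T : ℤ) : ZMod 2) = 1 := by
    intro T hT
    obtain ⟨h1, h2⟩ := Finset.mem_inter.mp hT
    rcases polytabloid_apply_mem s h1 with h | h <;>
      rcases polytabloid_apply_mem t h2 with h' | h' <;>
      rw [h, h'] <;> decide
  rw [Int.cast_sum, Finset.sum_congr rfl key, Finset.sum_const]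
  simp

/-- Let `μ` be a partition of `n` with distinct parts, `t` a `μ`-tableau and `π ∈ S_n` an
involution.  Then `⟨π·e_t, e_t⟩ ≡ |supp(πt) ∩ supp(t)| (mod 2)`. -/
theorem tabForm_polytabloid_modEq_card_inter
    (hpos : ∀ i ∈ μ, 0 < i) (hdist : μ.Chain' (· > ·)) (hsum : μ.sum = n)
    (t : YoungTableau n μ) (π : Equiv.Perm (Fin n)) (hπ : π ^ 2 = 1) (hπ1 : π ≠ 1) :
    tabForm (permMap π (polytabloid t)) (polytabloid t)
      ≡ ((tabSupp (permTableau π t) ∩ tabSupp t).card : ℤ) [ZMOD 2] := by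
  rw [permMap_polytabloid]
  exact tabForm_polytabloid_modEq _ _

end
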